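/- arXiv:2012.01374 — 2 statements merged into one kernel-verified Lean document; each statement's English description precedes it below -/
import Mathlib

section
/- Let G be a finite non-abelian group, H a subgroup of G with H ≠ Z(H,G), and g ∈ K(H,G) with g ≠ 1 and g² ≠ 1. Let x ∈ G \ H. (i) If exactly one of the two statements 'there exists h ∈ H with h⁻¹xh = xg' and 'there exists h ∈ H with h⁻¹xh = xg⁻¹' holds, then the degree of x in Δ_{H,G}^g equals |H| - |Z(H,G)| - |C_H(x)|. (ii) If both statements hold, then the degree of x in Δ_{H,G}^g equals |H| - |Z(H,G)| - 2|C_H(x)|. -/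
open SimpleGraph

/-- `Z(H,G)`: the set of elements of `H` commuting with every element of `G`. -/
def relCenter (G : Type*) [Group G] (H : Subgroup G) : Set G :=
  {x : G | x ∈ H ∧ ∀ y : G, x * y = y * x}

/-- The commutator `[x,y] = x⁻¹y⁻¹xy`. -/
def comm' {G : Type*} [Group G] (x y : G) : G :=
  x⁻¹ * y⁻¹ * x * y

lemma comm'_swap {G : Type*} [Group G] (x y : G) :
    comm' y x = (comm' x y)⁻¹ := by
  simp only [comm', mul_inv_rev, inv_inv, mul_assoc]

/-- `K(H,G) = {[x,y] : x ∈ H, y ∈ G}`. -/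
def relComm (G : Type*) [Group G] (H : Subgroup G) : Set G :=
  {w : G | ∃ x ∈ H, ∃ y : G, comm' x y = w}

/-- The graph `Δ_{H,G}^g`: vertices are the elements of `G \ Z(H,G)`, and two distinct
vertices `x`, `y` are adjacent iff (`x ∈ H` or `y ∈ H`) and `[x,y] ≠ g, g⁻¹`. -/
def gnc (G : Type*) [Group G] (H : Subgroup G) (g : G) :
    SimpleGraph (((relCenter G H)ᶜ : Set G)) where
  Adj x y := x ≠ y ∧ ((x : G) ∈ H ∨ (y : G) ∈ H) ∧
    comm' (x : G) (y : G) ≠ g ∧ comm' (x : G) (y : G) ≠ g⁻¹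
  symm := by
    refine ⟨?_⟩
    rintro x y ⟨hxy, hH, h1, h2⟩
    refine ⟨fun h => hxy h.symm, hH.symm, ?_, ?_⟩
    · rw [comm'_swap, ne_eq, inv_eq_iff_eq_inv]
      exact h2
    · rw [comm'_swap, ne_eq, inv_eq_iff_eq_inv, inv_inv]
      exact h1
  loopless := by
    refine ⟨?_⟩
    rintro x ⟨h, -⟩
    exact h rfl

/-- `C_H(x) = {h ∈ H : hx = xh}`. -/
def cH {G : Type*} [Group G] (H : Subgroup G) (x : G) : Set G :=
  {h : G | h ∈ H ∧ h * x = x * h}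

/-!
For `x ∉ H` the neighbours of `x` are the `y ∈ H \ Z(H,G)` with `[x,y] ∉ {g, g⁻¹}`.
Since `[x,y]` only depends on the coset `C_H(x) y`, the set of `y ∈ H` with `[x,y] = w` is
either empty or a coset `C_H(x) y₀`. As `g ≠ 1` and `g ≠ g⁻¹`, the fibres over `g` and `g⁻¹`
are disjoint from each other and from `Z(H,G)`, so the degree is `|H| - |Z(H,G)|` minus
`|C_H(x)|` for each nonempty fibre.
-/

section

variable {G : Type*} [Group G]

lemma comm'_eq_iff (x y w : G) : comm' x y = w ↔ y⁻¹ * x * y = x * w := by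
  have hassoc : comm' x y = x⁻¹ * (y⁻¹ * x * y) := by simp only [comm', mul_assoc]
  rw [hassoc, inv_mul_eq_iff_eq_mul]

lemma comm'_eq_one_of_mem_relCenter {H : Subgroup G} {z : G} (hz : z ∈ relCenter G H) (x : G) :
    comm' x z = 1 := by
  rw [comm'_eq_iff, mul_assoc, ← hz.2 x, inv_mul_cancel_left, mul_one]

lemma comm'_mul_left_of_commute {x c : G} (hc : c * x = x * c) (y : G) :
    comm' x (c * y) = comm' x y := by
  simp only [comm', mul_inv_rev, mul_assoc]
  rw [← mul_assoc x c y, ← hc, mul_assoc c, inv_mul_cancel_left]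

lemma commute_mul_inv_of_comm'_eq {x y z : G} (h : comm' x y = comm' x z) :
    y * z⁻¹ * x = x * (y * z⁻¹) := by
  have hconj : z⁻¹ * x * z = y⁻¹ * x * y := by
    simpa only [comm', mul_assoc, mul_right_inj] using h.symm
  calc y * z⁻¹ * x = y * (z⁻¹ * x * z) * z⁻¹ := by group
    _ = y * (y⁻¹ * x * y) * z⁻¹ := by rw [hconj]
    _ = x * (y * z⁻¹) := by group

def commFiber (H : Subgroup G) (x w : G) : Set G :=
  {y : G | y ∈ H ∧ comm' x y = w}

lemma commFiber_nonempty_iff (H : Subgroup G) (x w : G) :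
    (commFiber H x w).Nonempty ↔ ∃ h ∈ H, h⁻¹ * x * h = x * w := by
  simp only [Set.Nonempty, commFiber, Set.mem_ofPred_eq, comm'_eq_iff]

lemma commFiber_eq_image_cH {H : Subgroup G} {x w y₀ : G} (hy₀ : y₀ ∈ commFiber H x w) :
    commFiber H x w = (· * y₀) '' cH H x := by
  ext y
  constructor
  · rintro ⟨hyH, hy⟩
    refine ⟨y * y₀⁻¹, ⟨mul_mem hyH (inv_mem hy₀.1), ?_⟩, inv_mul_cancel_right y y₀⟩
    exact commute_mul_inv_of_comm'_eq (hy.trans hy₀.2.symm)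
  · rintro ⟨c, ⟨hcH, hcx⟩, rfl⟩
    exact ⟨mul_mem hcH hy₀.1, (comm'_mul_left_of_commute hcx y₀).trans hy₀.2⟩

lemma card_commFiber_of_nonempty {H : Subgroup G} {x w : G} (hne : (commFiber H x w).Nonempty) :
    Nat.card (commFiber H x w) = Nat.card (cH H x) := by
  obtain ⟨y₀, hy₀⟩ := hne
  rw [commFiber_eq_image_cH hy₀, Nat.card_image_of_injective (mul_left_injective y₀)]

lemma disjoint_relCenter_commFiber (H : Subgroup G) (x : G) {w : G} (hw : w ≠ 1) :
    Disjoint (relCenter G H) (commFiber H x w) :=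
  Set.disjoint_left.2 fun _ hz hy => hw (hy.2.symm.trans (comm'_eq_one_of_mem_relCenter hz x))

lemma disjoint_commFiber (H : Subgroup G) (x : G) {v w : G} (hvw : v ≠ w) :
    Disjoint (commFiber H x v) (commFiber H x w) :=
  Set.disjoint_left.2 fun _ hv hw => hvw (hv.2.symm.trans hw.2)

lemma val_image_neighborSet_gnc (H : Subgroup G) (g : G) {x : ((relCenter G H)ᶜ : Set G)}
    (hxH : (x : G) ∉ H) :
    Subtype.val '' (gnc G H g).neighborSet x
      = (H : Set G) \ (relCenter G H ∪ commFiber H x g ∪ commFiber H x g⁻¹) := by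
  ext y
  simp only [Set.mem_image, SimpleGraph.mem_neighborSet, gnc, Set.mem_sdiff, Set.mem_union,
    SetLike.mem_coe, commFiber, Set.mem_ofPred_eq]
  constructor
  · rintro ⟨y, ⟨-, hH, hg, hg'⟩, rfl⟩
    have hyH : (y : G) ∈ H := hH.resolve_left hxH
    exact ⟨hyH, by simp only [hyH, true_and, hg, hg', or_false]; exact y.2⟩
  · rintro ⟨hyH, hy⟩
    simp only [hyH, true_and, not_or] at hy
    refine ⟨⟨y, hy.1.1⟩, ⟨fun h => hxH ?_, Or.inr hyH, hy.1.2, hy.2⟩, rfl⟩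
    rwa [h]

lemma degree_gnc_of_notMem [Finite G] (H : Subgroup G) {g : G} (hg1 : g ≠ 1) (hg2 : g ^ 2 ≠ 1)
    {x : ((relCenter G H)ᶜ : Set G)} (hxH : (x : G) ∉ H)
    [Fintype ((gnc G H g).neighborSet x)] :
    (gnc G H g).degree x = Nat.card H - Nat.card (relCenter G H)
      - (Nat.card (commFiber H x g) + Nat.card (commFiber H x g⁻¹)) := by
  have hginv : g ≠ g⁻¹ := fun h => hg2 (by rw [pow_two]; nth_rw 2 [h]; exact mul_inv_cancel g)
  have hZH : relCenter G H ⊆ H := fun _ hz => hz.1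
  have hfib : ∀ w, commFiber H x w ⊆ H := fun _ _ hy => hy.1
  rw [← card_neighborSet_eq_degree, ← Nat.card_eq_fintype_card, Nat.card_coe_set_eq,
    ← Set.ncard_image_of_injective _ Subtype.val_injective, val_image_neighborSet_gnc H g hxH,
    Set.ncard_sdiff (Set.union_subset (Set.union_subset hZH (hfib g)) (hfib g⁻¹)),
    Set.ncard_union_eq (Set.disjoint_union_left.2
      ⟨disjoint_relCenter_commFiber H x (inv_ne_one.2 hg1), disjoint_commFiber H x hginv⟩),
    Set.ncard_union_eq (disjoint_relCenter_commFiber H x hg1), Nat.sub_sub, add_assoc]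
  rfl

end

open scoped Classical in
/-- degree of a vertex `x ∈ G \ H` when `g ≠ 1`, `g² ≠ 1`. -/
theorem stmt4 {G : Type*} [Group G] [Fintype G]
    (H : Subgroup G)
    (g : G) (hg1 : g ≠ 1) (hg2 : g ^ 2 ≠ 1)
    (x : G) (hxH : x ∉ H) :
    ((((∃ h ∈ H, h⁻¹ * x * h = x * g) ∧ ¬ (∃ h ∈ H, h⁻¹ * x * h = x * g⁻¹)) ∨
      ((¬ ∃ h ∈ H, h⁻¹ * x * h = x * g) ∧ (∃ h ∈ H, h⁻¹ * x * h = x * g⁻¹))) →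
      (gnc G H g).degree ⟨x, by exact fun h => hxH h.1⟩
        = Nat.card H - Nat.card (relCenter G H) - Nat.card (cH H x)) ∧
    (((∃ h ∈ H, h⁻¹ * x * h = x * g) ∧ (∃ h ∈ H, h⁻¹ * x * h = x * g⁻¹)) →
      (gnc G H g).degree ⟨x, by exact fun h => hxH h.1⟩
        = Nat.card H - Nat.card (relCenter G H) - 2 * Nat.card (cH H x)) := by
  simp only [← commFiber_nonempty_iff, Set.not_nonempty_iff_eq_empty]
  rw [degree_gnc_of_notMem H hg1 hg2 hxH]
  refine ⟨?_, ?_⟩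
  · rintro (⟨hg, hg'⟩ | ⟨hg, hg'⟩)
    · rw [card_commFiber_of_nonempty hg, hg', Nat.card_of_isEmpty (α := (∅ : Set G)), add_zero]
    · rw [card_commFiber_of_nonempty hg', hg, Nat.card_of_isEmpty (α := (∅ : Set G)), zero_add]
  · rintro ⟨hg, hg'⟩
    rw [card_commFiber_of_nonempty hg, card_commFiber_of_nonempty hg', two_mul]
end

section
/- Let n ≥ 5 be odd and G = D_{2n} the dihedral group of order 2n. (a) If H = ⟨a⟩ and g ∈ ⟨a⟩, then the graph Δ_{H,G}^g is connected and its diameter equals 2. (b) If H = ⟨a^r b⟩ = {1, a^r b} for some 1 ≤ r ≤ n and g ∈ ⟨a⟩, then Δ_{H,G}^g is connected with diameter equal to 2 when g = 1, and Δ_{H,G}^g is not connected when g ≠ 1. -/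
open SimpleGraph

/-! For odd `n` the centre of `D_{2n}` is trivial and `2` is a unit of `ZMod n`, so the vertex set
is always `G \ {1}`, and the commutators are `[r i, r j] = 1`, `[r i, sr j] = r (-2i)`,
`[sr i, sr j] = r (2(j - i))`.

For `H = ⟨r 1⟩` and `g = 1` the graph is complete bipartite between the nontrivial rotations and
the reflections. For `g = r k ≠ 1` a rotation `r i` with `2i ∉ {0, k, -k}`, which exists as
`n ≥ 5`, is adjacent to every other vertex. For `H = ⟨sr c⟩` and `g = 1` the reflection `sr c` is
adjacent to every other vertex, while for `g = r (2i) ≠ 1` the vertex `r i` can only be joined to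
`sr c`, and `[r i, sr c] = g⁻¹`. In the connected cases two vertices outside `H` are never
adjacent, so the diameter is exactly `2`.
-/

namespace SimpleGraph

variable {V : Type*} {G : SimpleGraph V}

lemma ediam_le_two_of_forall_adj (w : V) (hw : ∀ v, w ≠ v → G.Adj w v) : G.ediam ≤ 2 :=
  calc G.ediam ≤ 2 * G.eccent w := ediam_le_two_mul_eccent w
    _ ≤ 2 * 1 := by gcongr; exact (eccent_le_one_iff w).2 hw
    _ = 2 := mul_one 2

lemma ediam_le_two_of_forall_exists_adj
    (h : ∀ u v, u ≠ v → ¬ G.Adj u v → ∃ w, G.Adj u w ∧ G.Adj w v) : G.ediam ≤ 2 := by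
  refine ediam_le_iff.2 fun u v => not_lt.1 fun huv => ?_
  obtain ⟨hne, hadj, hcommon⟩ := two_lt_edist_iff.1 huv
  obtain ⟨w, huw, hwv⟩ := h u v hne hadj
  exact (Set.eq_empty_iff_forall_notMem.1 hcommon) w ⟨huw, hwv.symm⟩

lemma connected_and_diam_eq_two_of_ediam_le_two (h : G.ediam ≤ 2) {u v : V} (huv : u ≠ v)
    (hadj : ¬ G.Adj u v) : G.Connected ∧ G.diam = 2 := by
  have : Nontrivial V := ⟨⟨u, v, huv⟩⟩
  have hne_top : G ≠ ⊤ := fun htop => hadj (htop ▸ huv)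
  have h2 : G.ediam = 2 := by
    refine le_antisymm h ?_
    by_contra
    have := ediam_ne_zero (G := G)
    simp_all [Order.le_one_iff]
  refine ⟨connected_of_ediam_ne_top (by simp [h2]), ?_⟩
  rw [diam, h2]
  rfl

lemma not_connected_of_forall_not_adj [Nontrivial V] {u : V} (hu : ∀ w, ¬ G.Adj u w) :
    ¬ G.Connected := fun hG =>
  let ⟨w, huw⟩ := hG.preconnected.exists_adj_of_nontrivial u
  hu w huw

end SimpleGraph

section RelCenter

variable {G : Type*} [Group G] {H : Subgroup G} {g : G}

lemma mem_compl_relCenter_iff (hZ : Subgroup.center G = ⊥) {x : G} :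
    x ∈ (relCenter G H)ᶜ ↔ x ≠ 1 := by
  refine not_congr ⟨fun hx => ?_, fun hx => ⟨hx ▸ H.one_mem, fun y => by simp [hx]⟩⟩
  rw [← Subgroup.mem_bot, ← hZ, Subgroup.mem_center_iff]
  exact fun y => (hx.2 y).symm

@[simp]
lemma gnc_adj {x y : ((relCenter G H)ᶜ : Set G)} :
    (gnc G H g).Adj x y ↔ x ≠ y ∧ ((x : G) ∈ H ∨ (y : G) ∈ H) ∧
      comm' (x : G) (y : G) ≠ g ∧ comm' (x : G) (y : G) ≠ g⁻¹ := Iff.rfl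

end RelCenter

namespace ZMod

variable {n : ℕ}

lemma isUnit_two_of_odd (hodd : Odd n) : IsUnit (2 : ZMod n) := by
  simpa using (isUnit_iff_coprime 2 n).2 (Nat.coprime_two_left.2 hodd)

lemma two_mul_ne_zero_of_odd (hodd : Odd n) {i : ZMod n} (hi : i ≠ 0) : 2 * i ≠ 0 :=
  (isUnit_two_of_odd hodd).mul_right_eq_zero.not.2 hi

lemma exists_ne_zero_and_ne_and_ne_neg (hn : 3 < n) (k : ZMod n) :
    ∃ z : ZMod n, z ≠ 0 ∧ z ≠ k ∧ z ≠ -k := by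
  have : NeZero n := ⟨by omega⟩
  by_contra! h
  have huniv : ({0, k, -k} : Finset (ZMod n)) = Finset.univ :=
    Finset.eq_univ_of_forall fun z => by
      simp only [Finset.mem_insert, Finset.mem_singleton]
      tauto
  have := huniv ▸ Finset.card_le_three
  rw [Finset.card_univ, ZMod.card] at this
  omega

end ZMod

namespace DihedralGroup

open Subgroup

variable {n : ℕ}

@[simp] lemma r_eq_one_iff {i : ZMod n} : (r i : DihedralGroup n) = 1 ↔ i = 0 := by
  rw [one_def, r.injEq]

@[simp] lemma sr_ne_one {i : ZMod n} : (sr i : DihedralGroup n) ≠ 1 := by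
  rw [one_def]
  exact nofun

@[simp] lemma comm'_r_r (i j : ZMod n) : comm' (r i) (r j) = 1 := by
  simp only [comm', inv_r, r_mul_r, one_def]
  ring_nf

@[simp] lemma comm'_r_sr (i j : ZMod n) : comm' (r i) (sr j) = r (-(2 * i)) := by
  simp only [comm', inv_r, inv_sr, r_mul_sr, sr_mul_r, sr_mul_sr]
  ring_nf

@[simp] lemma comm'_sr_r (i j : ZMod n) : comm' (sr i) (r j) = r (2 * j) := by
  simp only [comm', inv_r, inv_sr, sr_mul_r, sr_mul_sr, r_mul_r]
  ring_nf

@[simp] lemma comm'_sr_sr (i j : ZMod n) : comm' (sr i) (sr j) = r (2 * (j - i)) := by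
  simp only [comm', inv_sr, sr_mul_sr, r_mul_sr]
  ring_nf

lemma mem_zpowers_r_one_iff {x : DihedralGroup n} :
    x ∈ zpowers (r 1) ↔ ∃ i, x = r i := by
  simp only [mem_zpowers_iff, r_one_zpow]
  constructor
  · rintro ⟨k, rfl⟩
    exact ⟨k, rfl⟩
  · rintro ⟨i, rfl⟩
    obtain ⟨k, rfl⟩ := ZMod.intCast_surjective i
    exact ⟨k, rfl⟩

lemma mem_zpowers_sr_iff {c : ZMod n} {x : DihedralGroup n} :
    x ∈ zpowers (sr c) ↔ x = 1 ∨ x = sr c := by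
  classical
  have hfin : IsOfFinOrder (sr c) := orderOf_pos_iff.1 (by rw [orderOf_sr]; norm_num)
  rw [hfin.mem_zpowers_iff_mem_range_orderOf, orderOf_sr]
  simp [Finset.range_add_one, or_comm]

lemma r_one_pow_mul_sr_zero (m : ℕ) :
    (r 1 : DihedralGroup n) ^ m * sr 0 = sr (-(m : ZMod n)) := by
  rw [r_one_pow, r_mul_sr, zero_sub]

lemma mem_compl_relCenter_iff [Fact (1 < n)] (hodd : Odd n) {H : Subgroup (DihedralGroup n)}
    {x : DihedralGroup n} : x ∈ (relCenter (DihedralGroup n) H)ᶜ ↔ x ≠ 1 :=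
  _root_.mem_compl_relCenter_iff (center_eq_bot_of_odd_ne_one hodd (Fact.out : 1 < n).ne')

section Rotations

variable {k i j : ZMod n} {hx : (r i : DihedralGroup n) ∈ (relCenter _ (zpowers (r 1)))ᶜ}

lemma gnc_zpowers_r_one_adj_r_r (hk : k ≠ 0) (hij : i ≠ j)
    {hy : (r j : DihedralGroup n) ∈ (relCenter _ (zpowers (r 1)))ᶜ} :
    (gnc _ (zpowers (r 1)) (r k)).Adj ⟨r i, hx⟩ ⟨r j, hy⟩ := by
  simp [hij, mem_zpowers_r_one_iff, inv_r, ← r_zero, hk, hk.symm]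

lemma gnc_zpowers_r_one_adj_r_sr (hk : 2 * i ≠ k) (hk' : 2 * i ≠ -k)
    {hy : (sr j : DihedralGroup n) ∈ (relCenter _ (zpowers (r 1)))ᶜ} :
    (gnc _ (zpowers (r 1)) (r k)).Adj ⟨r i, hx⟩ ⟨sr j, hy⟩ := by
  simp [mem_zpowers_r_one_iff, inv_r, neg_eq_iff_eq_neg, hk, hk']

end Rotations

lemma ediam_gnc_zpowers_r_one_one_le_two [Fact (1 < n)] (hodd : Odd n) :
    (gnc _ (zpowers (r 1 : DihedralGroup n)) 1).ediam ≤ 2 := by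
  have adj {i j : ZMod n} (hi : i ≠ 0) {hx hy} :
      (gnc _ (zpowers (r 1 : DihedralGroup n)) 1).Adj ⟨r i, hx⟩ ⟨sr j, hy⟩ :=
    gnc_zpowers_r_one_adj_r_sr (k := 0) (by simpa using ZMod.two_mul_ne_zero_of_odd hodd hi)
      (by simpa using ZMod.two_mul_ne_zero_of_odd hodd hi)
  have ne_zero {i : ZMod n} (hx : r i ∈ (relCenter _ (zpowers (r 1 : DihedralGroup n)))ᶜ) :
      i ≠ 0 := by
    simpa using (mem_compl_relCenter_iff hodd).1 hx
  have hr1 : r 1 ∈ (relCenter _ (zpowers (r 1 : DihedralGroup n)))ᶜ :=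
    (mem_compl_relCenter_iff hodd).2 (by simp)
  have hsr0 : sr 0 ∈ (relCenter _ (zpowers (r 1 : DihedralGroup n)))ᶜ :=
    (mem_compl_relCenter_iff hodd).2 sr_ne_one
  refine ediam_le_two_of_forall_exists_adj ?_
  rintro ⟨i | i, hx⟩ ⟨j | j, hy⟩ - hnadj
  · exact ⟨⟨sr 0, hsr0⟩, adj (ne_zero hx), (adj (ne_zero hy)).symm⟩
  · exact (hnadj (adj (ne_zero hx))).elim
  · exact (hnadj (adj (ne_zero hy)).symm).elim
  · exact ⟨⟨r 1, hr1⟩, (adj one_ne_zero).symm, adj one_ne_zero⟩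

lemma ediam_gnc_zpowers_r_one_le_two (hodd : Odd n) (hn : 3 < n) {k : ZMod n} (hk : k ≠ 0) :
    (gnc _ (zpowers (r 1 : DihedralGroup n)) (r k)).ediam ≤ 2 := by
  have : Fact (1 < n) := ⟨by omega⟩
  obtain ⟨z, hz0, hzk, hzk'⟩ := ZMod.exists_ne_zero_and_ne_and_ne_neg hn k
  obtain ⟨i, rfl⟩ := (ZMod.isUnit_two_of_odd hodd).dvd (a := z)
  have hi : r i ∈ (relCenter _ (zpowers (r 1 : DihedralGroup n)))ᶜ :=
    (mem_compl_relCenter_iff hodd).2 (by rw [ne_eq, r_eq_one_iff]; rintro rfl; simp at hz0)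
  refine ediam_le_two_of_forall_adj ⟨r i, hi⟩ ?_
  rintro ⟨j | j, hy⟩ hne
  · exact gnc_zpowers_r_one_adj_r_r hk fun hij => hne (by subst hij; rfl)
  · exact gnc_zpowers_r_one_adj_r_sr hzk hzk'

theorem gnc_zpowers_r_one_connected_and_diam_eq_two (hodd : Odd n) (hn : 3 < n) (k : ZMod n) :
    (gnc _ (zpowers (r 1 : DihedralGroup n)) (r k)).Connected ∧
      (gnc _ (zpowers (r 1 : DihedralGroup n)) (r k)).diam = 2 := by
  have : Fact (1 < n) := ⟨by omega⟩
  have hsr (j : ZMod n) : sr j ∈ (relCenter _ (zpowers (r 1 : DihedralGroup n)))ᶜ :=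
    (mem_compl_relCenter_iff hodd).2 sr_ne_one
  refine connected_and_diam_eq_two_of_ediam_le_two ?_
    (u := ⟨sr 0, hsr 0⟩) (v := ⟨sr 1, hsr 1⟩)
    (by simp) (by simp [mem_zpowers_r_one_iff])
  rcases eq_or_ne k 0 with rfl | hk
  · simpa using ediam_gnc_zpowers_r_one_one_le_two hodd
  · exact ediam_gnc_zpowers_r_one_le_two hodd hn hk

variable [Fact (1 < n)]

lemma ediam_gnc_zpowers_sr_one_le_two (hodd : Odd n) (c : ZMod n) :
    (gnc _ (zpowers (sr c : DihedralGroup n)) 1).ediam ≤ 2 := by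
  refine ediam_le_two_of_forall_adj ⟨sr c, (mem_compl_relCenter_iff hodd).2 sr_ne_one⟩ ?_
  rintro ⟨j | j, hy⟩ hne
  · have hj : j ≠ 0 := by simpa using (mem_compl_relCenter_iff hodd).1 hy
    simp [mem_zpowers_sr_iff, ZMod.two_mul_ne_zero_of_odd hodd hj]
  · have hcj : c ≠ j := fun h => hne (by subst h; rfl)
    simp [mem_zpowers_sr_iff, hcj, ZMod.two_mul_ne_zero_of_odd hodd (sub_ne_zero.2 hcj.symm)]

theorem gnc_zpowers_sr_one_connected_and_diam_eq_two (hodd : Odd n) (c : ZMod n) :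
    (gnc _ (zpowers (sr c : DihedralGroup n)) 1).Connected ∧
      (gnc _ (zpowers (sr c : DihedralGroup n)) 1).diam = 2 := by
  have htwo : (2 : ZMod n) ≠ 0 := by
    simpa using ZMod.two_mul_ne_zero_of_odd hodd (one_ne_zero (α := ZMod n))
  have hr (i : ZMod n) (hi : i ≠ 0) :
      r i ∈ (relCenter _ (zpowers (sr c : DihedralGroup n)))ᶜ :=
    (mem_compl_relCenter_iff hodd).2 (by simpa using hi)
  refine connected_and_diam_eq_two_of_ediam_le_two (ediam_gnc_zpowers_sr_one_le_two hodd c)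
    (u := ⟨r 1, hr 1 one_ne_zero⟩) (v := ⟨r 2, hr 2 htwo⟩) ?_ ?_
  · simp only [ne_eq, Subtype.mk.injEq, r.injEq]
    intro h
    exact one_ne_zero (by linear_combination -h)
  · simp [mem_zpowers_sr_iff, htwo]

theorem not_connected_gnc_zpowers_sr (hodd : Odd n) (c : ZMod n) {k : ZMod n} (hk : k ≠ 0) :
    ¬ (gnc _ (zpowers (sr c : DihedralGroup n)) (r k)).Connected := by
  obtain ⟨i, rfl⟩ := (ZMod.isUnit_two_of_odd hodd).dvd (a := k)
  have hi : r i ∈ (relCenter _ (zpowers (sr c : DihedralGroup n)))ᶜ :=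
    (mem_compl_relCenter_iff hodd).2 (by rw [ne_eq, r_eq_one_iff]; rintro rfl; simp at hk)
  have hsr : sr c ∈ (relCenter _ (zpowers (sr c : DihedralGroup n)))ᶜ :=
    (mem_compl_relCenter_iff hodd).2 sr_ne_one
  have : Nontrivial ↥((relCenter _ (zpowers (sr c : DihedralGroup n)))ᶜ) :=
    ⟨⟨⟨r i, hi⟩, ⟨sr c, hsr⟩, by simp⟩⟩
  refine not_connected_of_forall_not_adj (u := ⟨r i, hi⟩) ?_
  rintro ⟨y, hy⟩ ⟨-, hH, -, hinv⟩
  simp only [mem_zpowers_sr_iff] at hH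
  rcases hH with (h | h) | (rfl | rfl)
  · exact (mem_compl_relCenter_iff hodd).1 hi h
  · simp at h
  · exact (mem_compl_relCenter_iff hodd).1 hy rfl
  · simp [inv_r] at hinv

end DihedralGroup

/-- for odd `n ≥ 5` and `G = D_{2n}`:
(a) if `H = ⟨a⟩` and `g ∈ ⟨a⟩` then `Δ_{H,G}^g` is connected with diameter `2`;
(b) if `H = ⟨a^r b⟩` (`1 ≤ r ≤ n`) and `g ∈ ⟨a⟩` then `Δ_{H,G}^g` is connected with
diameter `2` when `g = 1`, and not connected when `g ≠ 1`. -/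
theorem stmt19 (n : ℕ) (hn : 5 ≤ n) (hodd : Odd n) :
    (∀ g ∈ Subgroup.zpowers (DihedralGroup.r 1 : DihedralGroup n),
      (gnc (DihedralGroup n) (Subgroup.zpowers (DihedralGroup.r 1 : DihedralGroup n)) g).Connected ∧
      (gnc (DihedralGroup n) (Subgroup.zpowers (DihedralGroup.r 1 : DihedralGroup n)) g).diam = 2) ∧
    (∀ r : ℕ, 1 ≤ r → r ≤ n → ∀ g ∈ Subgroup.zpowers (DihedralGroup.r 1 : DihedralGroup n),
      (g = 1 →
        (gnc (DihedralGroup n)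
          (Subgroup.zpowers ((DihedralGroup.r 1 : DihedralGroup n) ^ r * DihedralGroup.sr 0)) g).Connected ∧
        (gnc (DihedralGroup n)
          (Subgroup.zpowers ((DihedralGroup.r 1 : DihedralGroup n) ^ r * DihedralGroup.sr 0)) g).diam = 2) ∧
      (g ≠ 1 →
        ¬ (gnc (DihedralGroup n)
            (Subgroup.zpowers ((DihedralGroup.r 1 : DihedralGroup n) ^ r * DihedralGroup.sr 0)) g).Connected)) := by
  have : Fact (1 < n) := ⟨by omega⟩
  refine ⟨fun g hg => ?_, fun m _ _ g hg => ?_⟩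
  · obtain ⟨k, rfl⟩ := DihedralGroup.mem_zpowers_r_one_iff.1 hg
    exact DihedralGroup.gnc_zpowers_r_one_connected_and_diam_eq_two hodd (by omega) k
  · rw [DihedralGroup.r_one_pow_mul_sr_zero]
    obtain ⟨k, rfl⟩ := DihedralGroup.mem_zpowers_r_one_iff.1 hg
    refine ⟨fun hk => ?_, fun hk => ?_⟩
    · rw [hk]
      exact DihedralGroup.gnc_zpowers_sr_one_connected_and_diam_eq_two hodd _
    · exact DihedralGroup.not_connected_gnc_zpowers_sr hodd _ (by simpa using hk)
end
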